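/- Let d ≥ 1, L ≥ 2 be integers, Λ = (ℤ/2Lℤ)^d, N = (2L)^d, ε > 0, δ ≥ 0, J > 0. Let ν be a Borel probability measure on C such that ∫_C exp( t ∫₀¹ ω(τ)² dτ ) ν(dω) < ∞ for every t > 0, and suppose there exists a Borel set B ⊆ C with ν(B) ≥ e^{−δ} and ω(τ) ≥ √ε for every ω ∈ B and all τ ∈ [0,1]. Let Z(J) := ∫_{C^Λ} exp( J · Y_Λ ) dν^{⊗Λ} and μ_J := exp( J · Y_Λ ) ν^{⊗Λ} / Z(J). Then (1/N) Σ_{ℓ∈Λ} ∫_{C^Λ} ( ∫₀¹ ω_ℓ(τ)² dτ ) μ_J(dω_Λ) ≥ ε − δ/J. -/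

import Mathlib

/-!
Under `μ_J ∝ exp(J Y_Λ) ν^{⊗Λ}` the mean energy obeys `⟨Y_Λ⟩ ≥ c - η/J` as soon as `Y_Λ ≥ c` on a
set of `ν^{⊗Λ}`-mass at least `e^{-η}`: then `Z(J) ≥ e^{Jc - η}`, and integrating the tangent-line
bound `(s - y) e^y ≤ e^s - e^y` at `s = Jc - η`, `y = J Y_Λ` gives `(c - η/J) Z ≤ ∫ Y_Λ e^{J Y_Λ}`.
On `B^Λ` every bond has `Y ≥ ε`, so `c = N d ε` and `η = N δ`. Conversely
`|Y(ω, ω')| ≤ (∫ω² + ∫ω'²)/2` and every site has exactly `2d` neighbours (`2 ≠ 0` in `ℤ/2Lℤ`),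
so `Y_Λ ≤ d Σ_ℓ ∫ω_ℓ²` and `Σ_ℓ ⟨∫ω_ℓ²⟩ ≥ Nε - Nδ/(dJ) ≥ N(ε - δ/J)`. All integrands are
dominated by `exp(t Σ_ℓ ∫ω_ℓ²)`, which factorises over the sites.
-/

open MeasureTheory ENNReal

noncomputable section

/-- The space `C` of continuous paths `ω : [0,1] → ℝ` with `ω 0 = ω 1`. -/
abbrev PathSpace : Type := {ω : C(unitInterval, ℝ) // ω 0 = ω 1}

instance : MeasurableSpace PathSpace := borel PathSpace

/-- The discrete torus `Λ = (ℤ/2Lℤ)^d`. -/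
abbrev Torus (d L : ℕ) : Type := Fin d → ZMod (2 * L)

/-- Nearest-neighbor relation on the torus: `ℓ - ℓ' = ± e_j` for some coordinate `j`. -/
def isNN {d L : ℕ} (ℓ ℓ' : Torus d L) : Prop :=
  ∃ j : Fin d, ℓ - ℓ' = Pi.single j 1 ∨ ℓ' - ℓ = Pi.single j 1

/-- `Y(ω, ω') = ∫₀¹ ω(τ) ω'(τ) dτ`. -/
def Ypair (ω ω' : PathSpace) : ℝ := ∫ τ : unitInterval, ω.1 τ * ω'.1 τ

open Classical in
/-- `Y_Λ(ω_Λ) = (1/2) Σ_{ℓ,ℓ' nearest neighbors} Y(ω_ℓ, ω_{ℓ'})`, the sum over ordered pairs. -/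
def YLam (d L : ℕ) [NeZero (2 * L)] (ωΛ : Torus d L → PathSpace) : ℝ :=
  (1 / 2) * ∑ ℓ : Torus d L, ∑ ℓ' : Torus d L,
    if isNN ℓ ℓ' then Ypair (ωΛ ℓ) (ωΛ ℓ') else 0

/-- The partition function `Z(J) = ∫ exp(J Y_Λ) dν^{⊗Λ}`. -/
def Zfun (d L : ℕ) [NeZero (2 * L)] (ν : Measure PathSpace) (J : ℝ) : ℝ :=
  ∫ ωΛ : Torus d L → PathSpace, Real.exp (J * YLam d L ωΛ) ∂(Measure.pi fun _ => ν)

/-- The Gibbs probability measure `μ_J = Z(J)⁻¹ exp(J Y_Λ) ν^{⊗Λ}`. -/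
def gibbs (d L : ℕ) [NeZero (2 * L)] (ν : Measure PathSpace) (J : ℝ) :
    Measure (Torus d L → PathSpace) :=
  (Measure.pi fun _ => ν).withDensity
    (fun ωΛ => ENNReal.ofReal (Real.exp (J * YLam d L ωΛ) / Zfun d L ν J))

instance : BorelSpace PathSpace := ⟨rfl⟩

def meanSq (ω : PathSpace) : ℝ := ∫ τ : unitInterval, (ω.1 τ) ^ 2

lemma integrable_of_continuous_unitInterval {f : unitInterval → ℝ} (hf : Continuous f) :
    Integrable f :=
  hf.integrable_of_hasCompactSupport (HasCompactSupport.of_compactSpace f)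

lemma lipschitzWith_integral_unitInterval :
    LipschitzWith 1 fun f : C(unitInterval, ℝ) => ∫ τ, f τ := by
  refine LipschitzWith.of_dist_le_mul fun f g => ?_
  rw [NNReal.coe_one, one_mul, dist_eq_norm f g, Real.dist_eq,
    ← integral_sub (integrable_of_continuous_unitInterval f.continuous)
      (integrable_of_continuous_unitInterval g.continuous)]
  simpa using norm_integral_le_of_norm_le_const (μ := volume)
    (Filter.Eventually.of_forall fun τ => (f - g).norm_coe_le_norm τ)

lemma continuous_meanSq : Continuous meanSq :=
  lipschitzWith_integral_unitInterval.continuous.comp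
    (by fun_prop : Continuous fun ω : PathSpace => ω.1 ^ 2)

lemma continuous_Ypair : Continuous fun p : PathSpace × PathSpace => Ypair p.1 p.2 :=
  lipschitzWith_integral_unitInterval.continuous.comp
    (by fun_prop : Continuous fun p : PathSpace × PathSpace => p.1.1 * p.2.1)

lemma meanSq_nonneg (ω : PathSpace) : 0 ≤ meanSq ω :=
  integral_nonneg fun _ => sq_nonneg _

lemma abs_Ypair_le (ω ω' : PathSpace) : |Ypair ω ω'| ≤ (meanSq ω + meanSq ω') / 2 := by
  have hint : ∀ f : C(unitInterval, ℝ), Integrable f := fun f =>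
    integrable_of_continuous_unitInterval f.continuous
  calc |Ypair ω ω'| ≤ ∫ τ, |ω.1 τ * ω'.1 τ| := abs_integral_le_integral_abs
    _ ≤ ∫ τ, ((ω.1 τ) ^ 2 + (ω'.1 τ) ^ 2) / 2 :=
        integral_mono (hint (ω.1 * ω'.1)).abs ((hint (ω.1 ^ 2 + ω'.1 ^ 2)).div_const 2)
          fun τ => by
            dsimp only
            rw [abs_mul]
            nlinarith [sq_nonneg (|ω.1 τ| - |ω'.1 τ|), sq_abs (ω.1 τ), sq_abs (ω'.1 τ)]
    _ = (meanSq ω + meanSq ω') / 2 := by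
        rw [integral_div, integral_add (integrable_of_continuous_unitInterval (by fun_prop))
          (integrable_of_continuous_unitInterval (by fun_prop))]
        rfl

lemma le_Ypair {ε : ℝ} {ω ω' : PathSpace} (hω : ∀ τ, Real.sqrt ε ≤ ω.1 τ)
    (hω' : ∀ τ, Real.sqrt ε ≤ ω'.1 τ) : ε ≤ Ypair ω ω' := by
  have hmono : ∫ _ : unitInterval, Real.sqrt ε ^ 2 ≤ Ypair ω ω' :=
    integral_mono (integrable_const _)
      (integrable_of_continuous_unitInterval (ω.1 * ω'.1).continuous) fun τ =>
      (sq (Real.sqrt ε)).symm ▸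
        mul_le_mul (hω τ) (hω' τ) (Real.sqrt_nonneg ε) ((Real.sqrt_nonneg ε).trans (hω τ))
  calc ε ≤ Real.sqrt ε ^ 2 := Real.sq_sqrt' ▸ le_max_left ε 0
    _ ≤ Ypair ω ω' := by simpa using hmono

lemma sub_mul_exp_le_exp_sub_exp (s y : ℝ) : (s - y) * Real.exp y ≤ Real.exp s - Real.exp y := by
  have h := mul_le_mul_of_nonneg_right (Real.add_one_le_exp (s - y)) (Real.exp_pos y).le
  rw [← Real.exp_add, sub_add_cancel] at h
  linarith

section Gibbs

variable {α : Type*} [MeasurableSpace α] {m : Measure α} {H : α → ℝ} {J : ℝ}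

def gibbsMeasure (m : Measure α) (H : α → ℝ) (J : ℝ) : Measure α :=
  m.withDensity fun x => ENNReal.ofReal (Real.exp (J * H x) / ∫ y, Real.exp (J * H y) ∂m)

lemma integral_gibbsMeasure (hH : Measurable H) (f : α → ℝ) :
    ∫ x, f x ∂gibbsMeasure m H J
      = (∫ x, f x * Real.exp (J * H x) ∂m) / ∫ x, Real.exp (J * H x) ∂m := by
  have hZ : 0 ≤ ∫ x, Real.exp (J * H x) ∂m := integral_nonneg fun _ => (Real.exp_pos _).le
  rw [gibbsMeasure, integral_withDensity_eq_integral_toReal_smul (by fun_prop)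
    (Filter.Eventually.of_forall fun _ => ofReal_lt_top), ← integral_div]
  refine integral_congr_ae (Filter.Eventually.of_forall fun x => ?_)
  simp only [smul_eq_mul, toReal_ofReal (div_nonneg (Real.exp_pos _).le hZ)]
  ring

lemma MeasureTheory.Integrable.of_gibbsMeasure (hH : Measurable H) {f : α → ℝ}
    (hf : Integrable (fun x => f x * Real.exp (J * H x)) m) :
    Integrable f (gibbsMeasure m H J) := by
  have hZ : 0 ≤ ∫ x, Real.exp (J * H x) ∂m := integral_nonneg fun _ => (Real.exp_pos _).le
  rw [gibbsMeasure, integrable_withDensity_iff_integrable_smul' (by fun_prop)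
    (Filter.Eventually.of_forall fun _ => ofReal_lt_top)]
  refine (hf.div_const (∫ x, Real.exp (J * H x) ∂m)).congr
    (Filter.Eventually.of_forall fun x => ?_)
  simp only [smul_eq_mul, toReal_ofReal (div_nonneg (Real.exp_pos _).le hZ)]
  ring

lemma exp_mul_measureReal_le_integral_exp [IsFiniteMeasure m] (hJ : 0 ≤ J)
    (hG : Integrable (fun x => Real.exp (J * H x)) m) {A : Set α} (hA : MeasurableSet A) {c : ℝ}
    (hHA : ∀ x ∈ A, c ≤ H x) :
    Real.exp (J * c) * m.real A ≤ ∫ x, Real.exp (J * H x) ∂m :=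
  (setIntegral_ge_of_const_le_real hA (measure_ne_top m A)
    (fun x hx => Real.exp_le_exp.2 (mul_le_mul_of_nonneg_left (hHA x hx) hJ))
    hG.integrableOn).trans
    (setIntegral_le_integral hG (Filter.Eventually.of_forall fun _ => (Real.exp_pos _).le))

lemma mul_integral_exp_le_integral_mul_exp [IsProbabilityMeasure m] (hJ : 0 < J)
    (hG : Integrable (fun x => Real.exp (J * H x)) m)
    (hHG : Integrable (fun x => H x * Real.exp (J * H x)) m) {a : ℝ}
    (hZ : Real.exp (J * a) ≤ ∫ x, Real.exp (J * H x) ∂m) :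
    a * ∫ x, Real.exp (J * H x) ∂m ≤ ∫ x, H x * Real.exp (J * H x) ∂m := by
  have key : ∫ x, J * (a * Real.exp (J * H x) - H x * Real.exp (J * H x)) ∂m
      ≤ ∫ x, (Real.exp (J * a) - Real.exp (J * H x)) ∂m :=
    integral_mono (((hG.const_mul a).sub hHG).const_mul J) ((integrable_const _).sub hG)
      fun x => by
        have := sub_mul_exp_le_exp_sub_exp (J * a) (J * H x)
        dsimp only
        linarith
  rw [integral_const_mul, integral_sub (hG.const_mul a) hHG, integral_const_mul,
    integral_sub (integrable_const _) hG, integral_const, probReal_univ, one_smul] at key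
  nlinarith

theorem sub_div_le_integral_gibbsMeasure [IsProbabilityMeasure m] (hH : Measurable H)
    (hJ : 0 < J) (hG : Integrable (fun x => Real.exp (J * H x)) m)
    (hHG : Integrable (fun x => H x * Real.exp (J * H x)) m) {A : Set α} (hA : MeasurableSet A)
    {c η : ℝ} (hHA : ∀ x ∈ A, c ≤ H x) (hmA : ENNReal.ofReal (Real.exp (-η)) ≤ m A) :
    c - η / J ≤ ∫ x, H x ∂gibbsMeasure m H J := by
  have hmA' : Real.exp (-η) ≤ m.real A :=
    (ofReal_le_iff_le_toReal (measure_ne_top m A)).1 hmA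
  have hZ : Real.exp (J * (c - η / J)) ≤ ∫ x, Real.exp (J * H x) ∂m :=
    calc Real.exp (J * (c - η / J)) = Real.exp (J * c) * Real.exp (-η) := by
          rw [← Real.exp_add]; congr 1; field_simp; ring
      _ ≤ Real.exp (J * c) * m.real A := by gcongr
      _ ≤ _ := exp_mul_measureReal_le_integral_exp hJ.le hG hA hHA
  rw [integral_gibbsMeasure hH, le_div_iff₀ ((Real.exp_pos _).trans_le hZ)]
  exact mul_integral_exp_le_integral_mul_exp hJ hG hHG hZ

end Gibbs

section Torus

open Finset Classical

variable {d L : ℕ}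

lemma isNN_comm (ℓ ℓ' : Torus d L) : isNN ℓ ℓ' ↔ isNN ℓ' ℓ :=
  exists_congr fun _ => or_comm

lemma card_torus [NeZero (2 * L)] : Fintype.card (Torus d L) = (2 * L) ^ d := by
  simp [Fintype.card_pi, ZMod.card]

def signedUnit (d L : ℕ) : Fin d ⊕ Fin d → Torus d L :=
  Sum.elim (fun j => Pi.single j 1) (fun j => -Pi.single j 1)

lemma signedUnit_injective (hL : 2 ≤ L) : Function.Injective (signedUnit d L) := by
  have : Fact (1 < 2 * L) := ⟨by omega⟩
  have htwo : (2 : ZMod (2 * L)) ≠ 0 := by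
    have : ((2 : ℕ) : ZMod (2 * L)) ≠ 0 := by
      rw [Ne, ZMod.natCast_eq_zero_iff]
      exact Nat.not_dvd_of_pos_of_lt two_pos (by omega)
    exact_mod_cast this
  -- compare `j`-th coordinates: `e_j = ± e_k` forces `j = k`, and `e_j ≠ -e_j` since `2 ≠ 0`
  rintro (j | j) (k | k) h <;> have hj := congrFun h j <;>
    simp only [signedUnit, Sum.elim_inl, Sum.elim_inr, Pi.neg_apply, Pi.single_apply] at hj <;>
    split_ifs at hj <;>
    simp_all [eq_neg_iff_add_eq_zero, neg_eq_iff_add_eq_zero, one_add_one_eq_two]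

lemma card_filter_isNN [NeZero (2 * L)] (hL : 2 ≤ L) (ℓ : Torus d L) :
    #{ℓ' | isNN ℓ ℓ'} = 2 * d := by
  have hnbhd : ({ℓ' | isNN ℓ ℓ'} : Finset (Torus d L))
      = univ.image (ℓ + signedUnit d L ·) := by
    ext ℓ'
    rw [mem_filter_univ]
    simp only [mem_image, mem_univ, true_and, Sum.exists, signedUnit,
      Sum.elim_inl, Sum.elim_inr, isNN]
    constructor
    · rintro ⟨j, h | h⟩
      · exact Or.inr ⟨j, by rw [← h]; abel⟩
      · exact Or.inl ⟨j, by rw [← h]; abel⟩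
    · rintro (⟨j, rfl⟩ | ⟨j, rfl⟩)
      · exact ⟨j, Or.inr (by abel)⟩
      · exact ⟨j, Or.inl (by abel)⟩
  rw [hnbhd, card_image_of_injective _ fun a b h => signedUnit_injective hL (add_left_cancel h)]
  simp [two_mul]

lemma sum_sum_isNN_avg [NeZero (2 * L)] (hL : 2 ≤ L) (x : Torus d L → ℝ) :
    ∑ ℓ, ∑ ℓ', (if isNN ℓ ℓ' then (x ℓ + x ℓ') / 2 else 0) = 2 * d * ∑ ℓ, x ℓ := by
  have hrow : ∀ ℓ, ∑ ℓ', (if isNN ℓ ℓ' then x ℓ else 0) = 2 * d * x ℓ := fun ℓ => by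
    rw [← sum_filter, sum_const, card_filter_isNN hL, nsmul_eq_mul]
    push_cast; ring
  have hcol : ∑ ℓ, ∑ ℓ', (if isNN ℓ ℓ' then x ℓ' else 0)
      = ∑ ℓ, ∑ ℓ', (if isNN ℓ ℓ' then x ℓ else 0) := by
    rw [sum_comm]
    exact sum_congr rfl fun _ _ => sum_congr rfl fun _ _ => if_congr (isNN_comm _ _) rfl rfl
  have hsplit : ∀ ℓ ℓ', (if isNN ℓ ℓ' then (x ℓ + x ℓ') / 2 else 0)
      = ((if isNN ℓ ℓ' then x ℓ else 0) + (if isNN ℓ ℓ' then x ℓ' else 0)) / 2 := by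
    intro ℓ ℓ'; split_ifs <;> simp
  simp only [hsplit, ← sum_div, sum_add_distrib, hcol, hrow, ← mul_sum]
  ring

lemma abs_YLam_le [NeZero (2 * L)] (hL : 2 ≤ L) (ωΛ : Torus d L → PathSpace) :
    |YLam d L ωΛ| ≤ d * ∑ ℓ, meanSq (ωΛ ℓ) := by
  rw [YLam, abs_mul, abs_of_pos one_half_pos]
  calc 1 / 2 * |∑ ℓ, ∑ ℓ', if isNN ℓ ℓ' then Ypair (ωΛ ℓ) (ωΛ ℓ') else 0|
      ≤ 1 / 2 * ∑ ℓ, ∑ ℓ', if isNN ℓ ℓ' then (meanSq (ωΛ ℓ) + meanSq (ωΛ ℓ')) / 2 else 0 := by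
        gcongr
        refine (abs_sum_le_sum_abs _ _).trans (sum_le_sum fun ℓ _ => ?_)
        refine (abs_sum_le_sum_abs _ _).trans (sum_le_sum fun ℓ' _ => ?_)
        split_ifs
        · exact abs_Ypair_le _ _
        · simp
    _ = d * ∑ ℓ, meanSq (ωΛ ℓ) := by rw [sum_sum_isNN_avg hL]; ring

lemma card_mul_mul_le_YLam [NeZero (2 * L)] (hL : 2 ≤ L) {ε : ℝ}
    {ωΛ : Torus d L → PathSpace} (hpos : ∀ ℓ τ, Real.sqrt ε ≤ (ωΛ ℓ).1 τ) :
    Fintype.card (Torus d L) * d * ε ≤ YLam d L ωΛ := by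
  calc Fintype.card (Torus d L) * d * ε
      = 1 / 2 * ∑ ℓ : Torus d L, ∑ ℓ', if isNN ℓ ℓ' then (ε + ε) / 2 else 0 := by
        rw [sum_sum_isNN_avg hL (fun _ => ε), sum_const, card_univ, nsmul_eq_mul]; ring
    _ ≤ YLam d L ωΛ := by
        rw [YLam]
        gcongr with ℓ _ ℓ' _
        split_ifs
        · rw [add_self_div_two]; exact le_Ypair (hpos ℓ) (hpos ℓ')
        · rfl

lemma continuous_YLam [NeZero (2 * L)] : Continuous (YLam d L) := by
  refine continuous_const.mul (continuous_finsetSum _ fun ℓ _ =>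
    continuous_finsetSum _ fun ℓ' _ => ?_)
  split_ifs
  · exact continuous_Ypair.comp₂ (continuous_apply ℓ) (continuous_apply ℓ')
  · exact continuous_const

end Torus

lemma MeasureTheory.Integrable.exp_sum_pi {ι E : Type*} [Fintype ι] [MeasurableSpace E]
    {ν : Measure E} [SigmaFinite ν] {f : E → ℝ} (hf : Integrable (fun y => Real.exp (f y)) ν) :
    Integrable (fun x : ι → E => Real.exp (∑ i, f (x i))) (Measure.pi fun _ => ν) := by
  simp_rw [Real.exp_sum]
  exact Integrable.fintype_prod fun _ => hf

lemma ofReal_exp_neg_card_mul_le_pi_univ_pi {ι E : Type*} [Fintype ι] [MeasurableSpace E]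
    {ν : Measure E} [SigmaFinite ν] {B : Set E} {δ : ℝ}
    (hB : ENNReal.ofReal (Real.exp (-δ)) ≤ ν B) :
    ENNReal.ofReal (Real.exp (-(Fintype.card ι * δ)))
      ≤ Measure.pi (fun _ : ι => ν) (Set.univ.pi fun _ => B) := by
  rw [Measure.pi_pi, Finset.prod_const, Finset.card_univ, neg_mul_eq_mul_neg, Real.exp_nat_mul,
    ofReal_pow (Real.exp_pos _).le]
  gcongr

section Integrability

variable {d L : ℕ} [NeZero (2 * L)] {ν : Measure PathSpace} [SigmaFinite ν] {J : ℝ}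

lemma integrable_mul_exp_YLam (hL : 2 ≤ L)
    (hexp : ∀ t : ℝ, 0 < t → Integrable (fun ω => Real.exp (t * meanSq ω)) ν) (hJ : 0 ≤ J)
    {g : (Torus d L → PathSpace) → ℝ} (hg : AEStronglyMeasurable g (Measure.pi fun _ => ν))
    {c : ℝ} (hgc : ∀ ωΛ, |g ωΛ| ≤ c * (∑ ℓ, meanSq (ωΛ ℓ) + 1)) :
    Integrable (fun ωΛ => g ωΛ * Real.exp (J * YLam d L ωΛ)) (Measure.pi fun _ => ν) := by
  refine ((Integrable.exp_sum_pi (hexp (1 + J * d) (by positivity))).const_mul c).mono'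
    (hg.mul (Real.continuous_exp.comp (continuous_const.mul continuous_YLam)).aestronglyMeasurable)
    (Filter.Eventually.of_forall fun ωΛ => ?_)
  rw [← Finset.mul_sum]
  have hgω := hgc ωΛ
  have hYω := abs_YLam_le hL ωΛ
  have hS : 0 ≤ ∑ ℓ, meanSq (ωΛ ℓ) := Finset.sum_nonneg fun ℓ _ => meanSq_nonneg (ωΛ ℓ)
  generalize ∑ ℓ, meanSq (ωΛ ℓ) = S at hgω hYω hS ⊢
  have hc : 0 ≤ c := nonneg_of_mul_nonneg_left ((abs_nonneg _).trans hgω) (by positivity)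
  calc ‖g ωΛ * Real.exp (J * YLam d L ωΛ)‖
      = |g ωΛ| * Real.exp (J * YLam d L ωΛ) := by
        rw [norm_mul, Real.norm_eq_abs, Real.norm_eq_abs, Real.abs_exp]
    _ ≤ c * (S + 1) * Real.exp (J * (d * S)) :=
        mul_le_mul hgω (Real.exp_le_exp.2 (by gcongr; exact (le_abs_self _).trans hYω))
          (Real.exp_pos _).le (by positivity)
    _ ≤ c * Real.exp S * Real.exp (J * (d * S)) := by gcongr; exact Real.add_one_le_exp S
    _ = c * Real.exp ((1 + J * d) * S) := by rw [mul_assoc, ← Real.exp_add]; ring_nf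

lemma integrable_exp_YLam (hL : 2 ≤ L)
    (hexp : ∀ t : ℝ, 0 < t → Integrable (fun ω => Real.exp (t * meanSq ω)) ν) (hJ : 0 ≤ J) :
    Integrable (fun ωΛ => Real.exp (J * YLam d L ωΛ)) (Measure.pi fun _ => ν) := by
  simpa using integrable_mul_exp_YLam hL hexp hJ (g := fun _ => 1) aestronglyMeasurable_const
    (c := 1) fun ωΛ => by
      simpa using Finset.sum_nonneg fun ℓ _ => meanSq_nonneg (ωΛ ℓ)

lemma integrable_YLam_mul_exp_YLam (hL : 2 ≤ L)
    (hexp : ∀ t : ℝ, 0 < t → Integrable (fun ω => Real.exp (t * meanSq ω)) ν) (hJ : 0 ≤ J) :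
    Integrable (fun ωΛ => YLam d L ωΛ * Real.exp (J * YLam d L ωΛ)) (Measure.pi fun _ => ν) :=
  integrable_mul_exp_YLam hL hexp hJ continuous_YLam.aestronglyMeasurable (c := d) fun ωΛ =>
    (abs_YLam_le hL ωΛ).trans (by gcongr; exact le_add_of_nonneg_right zero_le_one)

lemma integrable_meanSq_mul_exp_YLam (hL : 2 ≤ L)
    (hexp : ∀ t : ℝ, 0 < t → Integrable (fun ω => Real.exp (t * meanSq ω)) ν) (hJ : 0 ≤ J)
    (ℓ : Torus d L) :
    Integrable (fun ωΛ => meanSq (ωΛ ℓ) * Real.exp (J * YLam d L ωΛ)) (Measure.pi fun _ => ν) :=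
  integrable_mul_exp_YLam hL hexp hJ
    (continuous_meanSq.comp (continuous_apply ℓ)).aestronglyMeasurable (c := 1) fun ωΛ => by
      rw [abs_of_nonneg (meanSq_nonneg _), one_mul]
      linarith [Finset.single_le_sum (fun ℓ _ => meanSq_nonneg (ωΛ ℓ)) (Finset.mem_univ ℓ)]

end Integrability

lemma integral_YLam_le {d L : ℕ} [NeZero (2 * L)] (hL : 2 ≤ L) {μ : Measure (Torus d L → PathSpace)}
    (hY : Integrable (YLam d L) μ) (hX : ∀ ℓ, Integrable (fun ωΛ => meanSq (ωΛ ℓ)) μ) :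
    ∫ ωΛ, YLam d L ωΛ ∂μ ≤ d * ∑ ℓ, ∫ ωΛ, meanSq (ωΛ ℓ) ∂μ := by
  rw [← integral_finsetSum _ fun ℓ _ => hX ℓ, ← integral_const_mul]
  exact integral_mono hY ((integrable_finsetSum _ fun ℓ _ => hX ℓ).const_mul _)
    fun ωΛ => (le_abs_self _).trans (abs_YLam_le hL ωΛ)

lemma gibbs_eq_gibbsMeasure (d L : ℕ) [NeZero (2 * L)] (ν : Measure PathSpace) (J : ℝ) :
    gibbs d L ν J = gibbsMeasure (Measure.pi fun _ => ν) (YLam d L) J :=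
  rfl

theorem crucial_estimate_general (d L : ℕ) (hd : 1 ≤ d) (hL : 2 ≤ L) [NeZero (2 * L)]
    (ε δ J : ℝ) (hδ : 0 ≤ δ) (hJ : 0 < J)
    (ν : Measure PathSpace) (hν : IsProbabilityMeasure ν)
    (hexp : ∀ t : ℝ, 0 < t →
      Integrable (fun ω : PathSpace => Real.exp (t * ∫ τ : unitInterval, (ω.1 τ) ^ 2)) ν)
    (B : Set PathSpace) (hBm : MeasurableSet B)
    (hνB : ENNReal.ofReal (Real.exp (-δ)) ≤ ν B)
    (hBpos : ∀ ω ∈ B, ∀ τ : unitInterval, Real.sqrt ε ≤ ω.1 τ) :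
    ε - δ / J
      ≤ (1 / (((2 * L) ^ d : ℕ) : ℝ)) * ∑ ℓ : Torus d L,
          ∫ ωΛ : Torus d L → PathSpace,
            (∫ τ : unitInterval, ((ωΛ ℓ).1 τ) ^ 2) ∂(gibbs d L ν J) := by
  rw [gibbs_eq_gibbsMeasure]
  set μ := gibbsMeasure (Measure.pi fun _ => ν) (YLam d L) J
  set N : ℝ := (Fintype.card (Torus d L) : ℝ)
  have hY : Measurable (YLam d L) := continuous_YLam.measurable
  have hYG := integrable_YLam_mul_exp_YLam (d := d) hL hexp hJ.le
  have hlower : N * d * ε - N * δ / J ≤ ∫ ωΛ, YLam d L ωΛ ∂μ :=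
    sub_div_le_integral_gibbsMeasure hY hJ (integrable_exp_YLam hL hexp hJ.le) hYG
      (MeasurableSet.univ_pi fun _ => hBm)
      (fun ωΛ hωΛ => card_mul_mul_le_YLam hL fun ℓ => hBpos _ (hωΛ ℓ (Set.mem_univ ℓ)))
      (ofReal_exp_neg_card_mul_le_pi_univ_pi hνB)
  have hupper : ∫ ωΛ, YLam d L ωΛ ∂μ ≤ d * ∑ ℓ, ∫ ωΛ, meanSq (ωΛ ℓ) ∂μ :=
    integral_YLam_le hL (hYG.of_gibbsMeasure hY) fun ℓ =>
      (integrable_meanSq_mul_exp_YLam hL hexp hJ.le ℓ).of_gibbsMeasure hY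
  have hd' : (0 : ℝ) ≤ d - 1 := sub_nonneg.2 (by exact_mod_cast hd)
  have hmul : d * (N * (ε - δ / J)) ≤ d * ∑ ℓ, ∫ ωΛ, meanSq (ωΛ ℓ) ∂μ := by
    linear_combination hlower + hupper + mul_nonneg hd' (by positivity : 0 ≤ N * δ / J)
  rw [← card_torus, one_div, inv_mul_eq_div, le_div_iff₀ (by positivity), mul_comm]
  exact le_of_mul_le_mul_left hmul (by positivity)

/-- The crucial lower estimate (c5) of the paper: combining Lemmas 1 and 2, the mean
squared displacement under the periodic Euclidean Gibbs measure is at least `ε - δ/J`. -/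
theorem crucial_estimate (d L : ℕ) (hd : 1 ≤ d) (hL : 2 ≤ L) [NeZero (2 * L)]
    (ε δ J : ℝ) (hε : 0 < ε) (hδ : 0 ≤ δ) (hJ : 0 < J)
    (ν : Measure PathSpace) (hν : IsProbabilityMeasure ν)
    (hexp : ∀ t : ℝ, 0 < t →
      Integrable (fun ω : PathSpace => Real.exp (t * ∫ τ : unitInterval, (ω.1 τ) ^ 2)) ν)
    (B : Set PathSpace) (hBm : MeasurableSet B)
    (hνB : ENNReal.ofReal (Real.exp (-δ)) ≤ ν B)
    (hBpos : ∀ ω ∈ B, ∀ τ : unitInterval, Real.sqrt ε ≤ ω.1 τ) :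
    ε - δ / J
      ≤ (1 / (((2 * L) ^ d : ℕ) : ℝ)) * ∑ ℓ : Torus d L,
          ∫ ωΛ : Torus d L → PathSpace,
            (∫ τ : unitInterval, ((ωΛ ℓ).1 τ) ^ 2) ∂(gibbs d L ν J) :=
  crucial_estimate_general d L hd hL ε δ J hδ hJ ν hν hexp B hBm hνB hBpos
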